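/- arXiv:1708.02321 — 3 statements merged into one kernel-verified Lean document; each statement's English description precedes it below -/
import Mathlib

section
/- For fixed x ∈ ℂ^{n_t}, y ∈ ℂ^{n_r}, H ∈ ℂ^{n_r × n_t}, and a probability distribution on phase vectors θ ∈ ℝ^{n_t+n_r} whose support has positive probability on every open set, define f(γ) := ln E_Θ[exp(-γ‖y - H_Θ x‖²)], where H_θ := diag(e^{iθ_{r,1}},...,e^{iθ_{r,n_r}}) H diag(e^{iθ_{t,1}},...,e^{iθ_{t,n_t}}). Then lim_{γ→∞} (-1/γ) f(γ) = m(x,y,H) := inf_{θ ∈ ℝ^{n_t+n_r}} ‖y - H_θ x‖². -/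
/-!
Laplace's principle: for `γ > 0`, `∫ exp (-γ f) dμ` is at most `μ(X) e^{-γ m}` with `m = inf f`,
and at least `μ {f < m + ε} e^{-γ (m + ε)}`. The set `{f < m + ε}` is open and nonempty, hence
has positive mass, so after taking `-(1/γ) log` both bounds differ from `m`, resp. `m + ε`, by
`O(1/γ)`.
-/

open MeasureTheory Filter Topology

/-- Squared Euclidean distance `‖y - H_θ x‖²` where the channel matrix `H` has its
rows multiplied by `e^{iθ_{r,k}}` and its columns by `e^{iθ_{t,l}}`. -/
noncomputable def perturbedNormSq {nt nr : ℕ} (H : Matrix (Fin nr) (Fin nt) ℂ)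
    (x : Fin nt → ℂ) (y : Fin nr → ℂ) (θ : (Fin nt → ℝ) × (Fin nr → ℝ)) : ℝ :=
  ∑ k, ‖(y k -
    Complex.exp (Complex.I * (θ.2 k)) *
      ∑ l, H k l * Complex.exp (Complex.I * (θ.1 l)) * x l)‖ ^ 2

namespace Real

lemma le_neg_inv_mul_log_of_le_mul_exp {γ b c I : ℝ} (hγ : 0 < γ) (hc : 0 < c) (hI : 0 < I)
    (h : I ≤ c * exp (-γ * b)) : b - log c / γ ≤ -(1 / γ) * log I := by
  have hlog : log I ≤ log c - γ * b := by
    simpa [log_mul hc.ne' (exp_pos _).ne', log_exp, sub_eq_add_neg] using log_le_log hI h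
  have hb : b - log c / γ = -(1 / γ) * (log c - γ * b) := by field_simp; ring
  exact hb ▸ mul_le_mul_of_nonpos_left hlog (by simp [hγ.le])

lemma neg_inv_mul_log_le_of_mul_exp_le {γ a c I : ℝ} (hγ : 0 < γ) (hc : 0 < c)
    (h : c * exp (-γ * a) ≤ I) : -(1 / γ) * log I ≤ a - log c / γ := by
  have hlog : log c - γ * a ≤ log I := by
    simpa [log_mul hc.ne' (exp_pos _).ne', log_exp, sub_eq_add_neg] using
      log_le_log (by positivity) h
  have ha : a - log c / γ = -(1 / γ) * (log c - γ * a) := by field_simp; ring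
  exact ha ▸ mul_le_mul_of_nonpos_left hlog (by simp [hγ.le])

end Real

section Laplace

open Real

variable {X : Type*} [TopologicalSpace X] [MeasurableSpace X] {μ : Measure X} [IsFiniteMeasure μ]
  {f : X → ℝ}

lemma measureReal_sublevel_pos [Nonempty X] (hf : Continuous f)
    (hpos : ∀ U : Set X, IsOpen U → U.Nonempty → 0 < μ U) {ε : ℝ} (hε : 0 < ε) :
    0 < μ.real (f ⁻¹' Set.Iio ((⨅ x, f x) + ε)) := by
  obtain ⟨x₀, hx₀⟩ := exists_lt_of_ciInf_lt (lt_add_of_pos_right (⨅ x, f x) hε)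
  exact ENNReal.toReal_pos (hpos _ (isOpen_Iio.preimage hf) ⟨x₀, hx₀⟩).ne' (measure_ne_top _ _)

variable [OpensMeasurableSpace X] {γ : ℝ}

lemma integrable_exp_neg_mul (hf : Continuous f) (hbdd : BddBelow (Set.range f)) (hγ : 0 ≤ γ) :
    Integrable (fun x => exp (-γ * f x)) μ := by
  obtain ⟨b, hb⟩ := hbdd
  refine Integrable.mono' (integrable_const (exp (-γ * b))) (by fun_prop) (ae_of_all _ fun x => ?_)
  rw [norm_of_nonneg (exp_pos _).le, exp_le_exp]
  nlinarith [hb (Set.mem_range_self x)]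

lemma integral_exp_neg_mul_le (hf : Continuous f) (hbdd : BddBelow (Set.range f)) (hγ : 0 ≤ γ) :
    ∫ x, exp (-γ * f x) ∂μ ≤ μ.real Set.univ * exp (-γ * ⨅ x, f x) := by
  calc ∫ x, exp (-γ * f x) ∂μ ≤ ∫ _, exp (-γ * ⨅ x, f x) ∂μ := by
        refine integral_mono (integrable_exp_neg_mul hf hbdd hγ) (integrable_const _) fun x => ?_
        rw [exp_le_exp]
        nlinarith [ciInf_le hbdd x]
    _ = μ.real Set.univ * exp (-γ * ⨅ x, f x) := by rw [integral_const, smul_eq_mul]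

lemma measureReal_mul_exp_le_integral (hf : Continuous f) (hbdd : BddBelow (Set.range f))
    (hγ : 0 ≤ γ) (a : ℝ) :
    μ.real (f ⁻¹' Set.Iio a) * exp (-γ * a) ≤ ∫ x, exp (-γ * f x) ∂μ := by
  have hint := integrable_exp_neg_mul (μ := μ) hf hbdd hγ
  calc μ.real (f ⁻¹' Set.Iio a) * exp (-γ * a) = ∫ _ in f ⁻¹' Set.Iio a, exp (-γ * a) ∂μ := by
        rw [setIntegral_const, smul_eq_mul]
    _ ≤ ∫ x in f ⁻¹' Set.Iio a, exp (-γ * f x) ∂μ := by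
        refine setIntegral_mono_on (integrableOn_const (measure_ne_top _ _)) hint.integrableOn
          (measurableSet_lt hf.measurable measurable_const) fun x hx => ?_
        rw [exp_le_exp]
        nlinarith [show f x < a from hx]
    _ ≤ ∫ x, exp (-γ * f x) ∂μ := setIntegral_le_integral hint (ae_of_all _ fun _ => (exp_pos _).le)

theorem tendsto_neg_inv_mul_log_integral_exp [Nonempty X] (hf : Continuous f)
    (hbdd : BddBelow (Set.range f))
    (hpos : ∀ U : Set X, IsOpen U → U.Nonempty → 0 < μ U) :
    Tendsto (fun γ : ℝ => -(1 / γ) * log (∫ x, exp (-γ * f x) ∂μ)) atTop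
      (𝓝 (⨅ x, f x)) := by
  set m := ⨅ x, f x
  have hle : ∀ ε > 0, ∀ γ > 0, -(1 / γ) * log (∫ x, exp (-γ * f x) ∂μ) ≤
      m + ε - log (μ.real (f ⁻¹' Set.Iio (m + ε))) / γ :=
    fun ε hε γ hγ => neg_inv_mul_log_le_of_mul_exp_le hγ (measureReal_sublevel_pos hf hpos hε)
      (measureReal_mul_exp_le_integral hf hbdd hγ.le _)
  have hge : ∀ γ > 0,
      m - log (μ.real Set.univ) / γ ≤ -(1 / γ) * log (∫ x, exp (-γ * f x) ∂μ) := by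
    intro γ hγ
    have hμ : 0 < μ.real Set.univ := (measureReal_sublevel_pos hf hpos one_pos).trans_le
      (measureReal_mono (Set.subset_univ _))
    have hI : 0 < ∫ x, exp (-γ * f x) ∂μ := (mul_pos (measureReal_sublevel_pos hf hpos
      one_pos) (exp_pos _)).trans_le (measureReal_mul_exp_le_integral hf hbdd hγ.le _)
    exact le_neg_inv_mul_log_of_le_mul_exp hγ hμ hI (integral_exp_neg_mul_le hf hbdd hγ.le)
  have hconst_sub (b c : ℝ) : Tendsto (fun γ : ℝ => b - c / γ) atTop (𝓝 b) := by
    simpa using (tendsto_const_nhds (x := b)).sub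
      ((tendsto_const_nhds (x := c)).div_atTop (tendsto_id (α := ℝ)))
  rw [tendsto_order]
  refine ⟨fun a ha => ?_, fun a ha => ?_⟩
  · filter_upwards [eventually_gt_atTop 0, (hconst_sub m _).eventually (lt_mem_nhds ha)]
      with γ hγ hlt
    exact hlt.trans_le (hge γ hγ)
  · have hε : 0 < (a - m) / 2 := by linarith
    have hma : m + (a - m) / 2 < a := by linarith
    filter_upwards [eventually_gt_atTop 0, (hconst_sub _ _).eventually (gt_mem_nhds hma)]
      with γ hγ hlt
    exact (hle _ hε γ hγ).trans_lt hlt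

end Laplace

lemma continuous_perturbedNormSq {nt nr : ℕ} (H : Matrix (Fin nr) (Fin nt) ℂ) (x : Fin nt → ℂ)
    (y : Fin nr → ℂ) : Continuous (perturbedNormSq H x y) := by
  unfold perturbedNormSq
  fun_prop

lemma perturbedNormSq_nonneg {nt nr : ℕ} (H : Matrix (Fin nr) (Fin nt) ℂ) (x : Fin nt → ℂ)
    (y : Fin nr → ℂ) (θ : (Fin nt → ℝ) × (Fin nr → ℝ)) : 0 ≤ perturbedNormSq H x y θ :=
  Finset.sum_nonneg fun _ _ => sq_nonneg _

theorem highSNR_loglikelihood_limit {nt nr : ℕ}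
    (H : Matrix (Fin nr) (Fin nt) ℂ) (x : Fin nt → ℂ) (y : Fin nr → ℂ)
    (μ : Measure ((Fin nt → ℝ) × (Fin nr → ℝ))) [IsProbabilityMeasure μ]
    (hpos : ∀ U : Set ((Fin nt → ℝ) × (Fin nr → ℝ)), IsOpen U → U.Nonempty → 0 < μ U) :
    Tendsto (fun γ : ℝ =>
        -(1 / γ) * Real.log (∫ θ, Real.exp (-γ * perturbedNormSq H x y θ) ∂μ))
      atTop (nhds (⨅ θ, perturbedNormSq H x y θ)) :=
  tendsto_neg_inv_mul_log_integral_exp (continuous_perturbedNormSq H x y)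
    ⟨0, Set.forall_mem_range.mpr (perturbedNormSq_nonneg H x y)⟩ hpos
end

section
/- Let Θ_r, Θ_r', Θ_t, Θ_t' be independent real Gaussians with Θ_r, Θ_r' ∼ N(0, σ_r²) and Θ_t, Θ_t' ∼ N(0, σ_t²). Then E[(1 - cos(Θ_t + Θ_r))(1 - cos(Θ_t' + Θ_r))] = 1 - 2e^{-(σ_r² + σ_t²)/2} + e^{-σ_r² - σ_t²} cosh(σ_r²). -/
/-!
For fixed `θr` the two inner integrals factor, and each equals `1 - e^{-vt/2} cos θr` because
`∫ cos (t x + a) dN(m, v) = e^{-v t²/2} cos (t m + a)` is the real part of `e^{ia}` times the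
characteristic function. Expanding the square with `cos² θ = (1 + cos 2θ)/2` reduces the outer
integral to the same formula at `t = 1` and `t = 2`, and the `t = 2` term produces the `cosh`.
-/

open MeasureTheory ProbabilityTheory Complex

section

variable {μ : Measure ℝ} [IsFiniteMeasure μ]

lemma integrable_cos_mul_add (t a : ℝ) : Integrable (fun x ↦ Real.cos (t * x + a)) μ :=
  .of_bound (by fun_prop) 1 (.of_forall fun x ↦ by simpa using Real.abs_cos_le_one _)

lemma integrable_cexp_mul_I (t : ℝ) : Integrable (fun x : ℝ ↦ cexp (t * x * I)) μ :=
  .of_bound (by fun_prop) 1 (.of_forall fun x ↦ by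
    rw [← ofReal_mul, norm_exp_ofReal_mul_I])

lemma integral_cos_mul_add_eq_re_charFun (t a : ℝ) :
    ∫ x, Real.cos (t * x + a) ∂μ = (cexp (a * I) * charFun μ t).re := by
  rw [charFun_apply_real, ← integral_const_mul, ← RCLike.re_to_complex,
    ← integral_re ((integrable_cexp_mul_I t).const_mul _)]
  congr 1 with x
  rw [RCLike.re_to_complex, ← exp_add, ← exp_ofReal_mul_I_re]
  push_cast
  ring_nf

end

lemma integral_cos_mul_add_gaussianReal (m : ℝ) (v : NNReal) (t a : ℝ) :
    ∫ x, Real.cos (t * x + a) ∂gaussianReal m v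
      = Real.exp (-(v * t ^ 2 / 2)) * Real.cos (t * m + a) := by
  rw [integral_cos_mul_add_eq_re_charFun, charFun_gaussianReal, ← exp_add, exp_re]
  congr 2
  · simp [← ofReal_pow]
  · simp [← ofReal_pow]
    ring

lemma integral_one_sub_cos_add_gaussianReal (m : ℝ) (v : NNReal) (a : ℝ) :
    ∫ x, (1 - Real.cos (x + a)) ∂gaussianReal m v = 1 - Real.exp (-(v / 2)) * Real.cos (m + a) := by
  have h := integral_cos_mul_add_gaussianReal m v 1 a
  simp only [one_mul, one_pow, mul_one] at h
  rw [integral_sub (integrable_const 1) (by simpa using integrable_cos_mul_add 1 a), h]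
  simp

lemma integral_sq_one_sub_mul_cos_gaussianReal (v : NNReal) (c : ℝ) :
    ∫ x, (1 - c * Real.cos x) ^ 2 ∂gaussianReal 0 v
      = 1 - 2 * c * Real.exp (-(v / 2)) + c ^ 2 * Real.exp (-v) * Real.cosh v := by
  have h_expand : ∀ x : ℝ, (1 - c * Real.cos x) ^ 2
      = (1 + c ^ 2 / 2) - 2 * c * Real.cos (1 * x + 0) + c ^ 2 / 2 * Real.cos (2 * x + 0) := by
    intro x
    rw [one_mul, add_zero, add_zero, Real.cos_two_mul]
    ring
  have h1 := integrable_cos_mul_add (μ := gaussianReal 0 v) 1 0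
  have h2 := integrable_cos_mul_add (μ := gaussianReal 0 v) 2 0
  simp_rw [h_expand]
  rw [integral_add (by exact (integrable_const _).sub (h1.const_mul _)) (h2.const_mul _),
    integral_sub (integrable_const _) (h1.const_mul _), integral_const_mul, integral_const_mul,
    integral_cos_mul_add_gaussianReal, integral_cos_mul_add_gaussianReal, Real.cosh_eq]
  have h_exp_sq : Real.exp (-(v * 2 ^ 2 / 2)) = Real.exp (-v) * Real.exp (-v) := by
    rw [← Real.exp_add]; ring_nf
  have h_exp_inv : Real.exp (-v) * Real.exp v = 1 := by
    rw [← Real.exp_add, neg_add_cancel, Real.exp_zero]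
  simp only [integral_const, probReal_univ, smul_eq_mul, one_mul, mul_zero, add_zero, Real.cos_zero,
    mul_one, one_pow, h_exp_sq]
  linear_combination (-(c ^ 2) / 2) * h_exp_inv

theorem gaussian_expectation_one_sub_cos_prod (vr vt : NNReal) :
    ∫ θr, ∫ θt, ∫ θt',
        (1 - Real.cos (θt + θr)) * (1 - Real.cos (θt' + θr))
        ∂(gaussianReal 0 vt) ∂(gaussianReal 0 vt) ∂(gaussianReal 0 vr)
      = 1 - 2 * Real.exp (-((vr : ℝ) + (vt : ℝ)) / 2) +
          Real.exp (-(vr : ℝ) - (vt : ℝ)) * Real.cosh (vr : ℝ) := by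
  have h_inner : ∀ θr : ℝ, ∫ θt, ∫ θt', (1 - Real.cos (θt + θr)) * (1 - Real.cos (θt' + θr))
      ∂(gaussianReal 0 vt) ∂(gaussianReal 0 vt) = (1 - Real.exp (-(vt / 2)) * Real.cos θr) ^ 2 := by
    intro θr
    simp only [integral_const_mul, integral_mul_const, integral_one_sub_cos_add_gaussianReal,
      zero_add]
    ring
  have h_half : Real.exp (-((vr : ℝ) + vt) / 2) = Real.exp (-(vt / 2)) * Real.exp (-(vr / 2)) := by
    rw [← Real.exp_add]; ring_nf
  have h_full : Real.exp (-(vr : ℝ) - vt) = Real.exp (-(vt / 2)) ^ 2 * Real.exp (-vr) := by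
    rw [← Real.exp_nat_mul, ← Real.exp_add]; ring_nf
  simp only [h_inner, integral_sq_one_sub_mul_cos_gaussianReal, h_half, h_full]
  ring
end

section
/- Define sinhc(x) := sinh(x)/x extended by sinhc(0) = 1, and let M(ξ) := e^{ξ} · sinhc(√(Sξ))^{-1/2} for S > 0 (interpreted via the entire function sinhc(√z) = Σ_{k≥0} z^k/(2k+1)!). Then M'(0) = 1 - S/12 and M''(0) - (M'(0))² = S²/180. -/
/-- The entire function `z ↦ sinhc (√z) = ∑ zᵏ/(2k+1)!` (restricted to the reals). -/
noncomputable def sinhcSqrt (z : ℝ) : ℝ := ∑' k : ℕ, z ^ k / (2 * k + 1).factorial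

/-- The (approximate) moment generating function `M(ξ) = e^ξ sinhc(√(Sξ))^{-1/2}` of the
amplitude of the filtered Wiener phase-noise channel gain. -/
noncomputable def amplitudeMGF (S : ℝ) (ξ : ℝ) : ℝ :=
  Real.exp ξ * (sinhcSqrt (S * ξ)) ^ (-(1 / 2) : ℝ)

/-! Since `M(0) = 1`, the quantities `M'(0)` and `M''(0) - M'(0)²` are the value and the
derivative at `0` of the logarithmic derivative `M'/M`. Near `0` this is
`M'/M (ξ) = 1 - (S/2) · g'/g (Sξ)` with `g = sinhcSqrt`, and the power series of `g` gives
`g(0) = 1`, `g'(0) = 1/6`, `g''(0) = 2/5! = 1/60`. Hence `M'(0) = 1 - S/12` and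
`M''(0) - M'(0)² = -(S²/2) (g''(0) - g'(0)²) = -(S²/2) (1/60 - 1/36) = S²/180`. -/

open FormalMultilinearSeries Filter Nat Topology

theorem iteratedDeriv_ofScalarsSum_zero {𝕜 : Type*} [NontriviallyNormedField 𝕜] [CompleteSpace 𝕜]
    [CharZero 𝕜] {c : ℕ → 𝕜} (hc : 0 < (ofScalars 𝕜 c).radius) (n : ℕ) :
    iteratedDeriv n (ofScalarsSum c) 0 = n ! * c n := by
  have hp : HasFPowerSeriesAt (ofScalarsSum c) (ofScalars 𝕜 c) 0 :=
    ((ofScalars 𝕜 c).hasFPowerSeriesOnBall hc).hasFPowerSeriesAt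
  have hcoeff := congrFun (ofScalars_series_injective (𝕜 := 𝕜) 𝕜
    (hp.analyticAt.hasFPowerSeriesAt.eq_formalMultilinearSeries hp)) n
  rw [div_eq_iff (Nat.cast_ne_zero.mpr n.factorial_ne_zero)] at hcoeff
  rw [hcoeff, mul_comm]

section LogDeriv

variable {𝕜 : Type*} [NontriviallyNormedField 𝕜] {f : 𝕜 → 𝕜} {x : 𝕜}

theorem deriv_logDeriv (hf : DifferentiableAt 𝕜 f x) (hf' : DifferentiableAt 𝕜 (deriv f) x)
    (hx : f x ≠ 0) : deriv (logDeriv f) x = deriv (deriv f) x / f x - logDeriv f x ^ 2 := by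
  rw [logDeriv, deriv_div hf' hf hx, Pi.div_apply]
  field_simp

theorem deriv_deriv_sub_sq_eq_deriv_logDeriv (hf : ContDiffAt 𝕜 2 f x) (hx : f x = 1) :
    deriv (deriv f) x - deriv f x ^ 2 = deriv (logDeriv f) x := by
  rw [deriv_logDeriv (hf.differentiableAt (by norm_num))
    ((hf.derivWithin (m := 1) (by norm_num)).differentiableAt (by norm_num)) (by simp [hx]),
    logDeriv_apply, hx, div_one, div_one]

theorem logDeriv_comp_const_mul (c : 𝕜) :
    logDeriv (fun y => f (c * y)) x = c * logDeriv f (c * x) := by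
  simp only [logDeriv_apply, deriv_comp_mul_left, smul_eq_mul, mul_div_assoc]

end LogDeriv

theorem logDeriv_fun_rpow_const {f : ℝ → ℝ} {x : ℝ} (hf : DifferentiableAt ℝ f x)
    (hx : 0 < f x) (p : ℝ) : logDeriv (fun y => f y ^ p) x = p * logDeriv f x := by
  rw [logDeriv_apply, logDeriv_apply, deriv_rpow_const hf (.inl hx.ne'),
    Real.rpow_sub_one hx.ne']
  field_simp [(Real.rpow_pos_of_pos hx p).ne']

noncomputable def sinhcSqrtCoeff (k : ℕ) : ℝ := ((2 * k + 1)! : ℝ)⁻¹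

theorem sinhcSqrt_eq_ofScalarsSum : sinhcSqrt = ofScalarsSum (E := ℝ) sinhcSqrtCoeff := by
  ext z
  simp only [sinhcSqrt, ofScalarsSum_eq_tsum, sinhcSqrtCoeff, smul_eq_mul, div_eq_inv_mul]

theorem sinhcSqrtCoeff_succ_div_le (n : ℕ) :
    ‖sinhcSqrtCoeff (n + 1)‖ / ‖sinhcSqrtCoeff n‖ ≤ 1 / (n + 1) := by
  have hfact : ((2 * (n + 1) + 1)! : ℝ) = (2 * n + 3) * (2 * n + 2) * (2 * n + 1)! := by
    rw [show 2 * (n + 1) + 1 = 2 * n + 1 + 1 + 1 by ring, factorial_succ, factorial_succ]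
    push_cast; ring
  rw [sinhcSqrtCoeff, sinhcSqrtCoeff, norm_inv, norm_inv, Real.norm_natCast, Real.norm_natCast,
    hfact, inv_div_inv, div_le_div_iff₀ (by positivity) (by positivity)]
  nlinarith

theorem radius_ofScalars_sinhcSqrtCoeff : (ofScalars ℝ sinhcSqrtCoeff).radius = ⊤ :=
  ofScalars_radius_eq_top_of_tendsto _ _
    (.of_forall fun n => by simp [sinhcSqrtCoeff, factorial_ne_zero])
    (squeeze_zero (fun _ => by positivity) sinhcSqrtCoeff_succ_div_le
      tendsto_one_div_add_atTop_nhds_zero_nat)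

theorem contDiff_sinhcSqrt {n : WithTop ℕ∞} : ContDiff ℝ n sinhcSqrt := by
  have h := (ofScalars ℝ sinhcSqrtCoeff).hasFPowerSeriesOnBall
    (radius_ofScalars_sinhcSqrtCoeff ▸ ENNReal.zero_lt_top)
  rw [radius_ofScalars_sinhcSqrtCoeff] at h
  rw [sinhcSqrt_eq_ofScalarsSum]
  exact AnalyticOnNhd.contDiff fun z _ => h.analyticAt_of_mem (by simp)

theorem differentiable_sinhcSqrt : Differentiable ℝ sinhcSqrt :=
  contDiff_sinhcSqrt.differentiable one_ne_zero

theorem iteratedDeriv_sinhcSqrt_zero (n : ℕ) :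
    iteratedDeriv n sinhcSqrt 0 = n ! / (2 * n + 1)! := by
  rw [sinhcSqrt_eq_ofScalarsSum, iteratedDeriv_ofScalarsSum_zero
    (by simp [radius_ofScalars_sinhcSqrtCoeff]), sinhcSqrtCoeff, div_eq_mul_inv]

theorem sinhcSqrt_zero : sinhcSqrt 0 = 1 := by
  simpa using iteratedDeriv_sinhcSqrt_zero 0

theorem deriv_sinhcSqrt_zero : deriv sinhcSqrt 0 = 1 / 6 := by
  simpa [factorial] using iteratedDeriv_sinhcSqrt_zero 1

theorem deriv_deriv_sinhcSqrt_zero : deriv (deriv sinhcSqrt) 0 = 1 / 60 := by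
  rw [← iteratedDeriv_one, ← iteratedDeriv_succ', iteratedDeriv_sinhcSqrt_zero]
  norm_num [factorial]

theorem amplitudeMGF_zero (S : ℝ) : amplitudeMGF S 0 = 1 := by
  simp [amplitudeMGF, sinhcSqrt_zero]

theorem contDiffAt_amplitudeMGF_zero (S : ℝ) {n : WithTop ℕ∞} :
    ContDiffAt ℝ n (amplitudeMGF S) 0 :=
  Real.contDiff_exp.contDiffAt.mul <|
    (Real.contDiffAt_rpow_const_of_ne (by simp [sinhcSqrt_zero])).comp 0
      (contDiff_sinhcSqrt.comp (contDiff_const.mul contDiff_id)).contDiffAt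

theorem logDeriv_amplitudeMGF (S : ℝ) {ξ : ℝ} (hξ : 0 < sinhcSqrt (S * ξ)) :
    logDeriv (amplitudeMGF S) ξ = 1 - S / 2 * logDeriv sinhcSqrt (S * ξ) := by
  have hd : DifferentiableAt ℝ (fun y => sinhcSqrt (S * y)) ξ :=
    differentiable_sinhcSqrt.differentiableAt.comp ξ (differentiableAt_id.const_mul S)
  unfold amplitudeMGF
  rw [logDeriv_mul (g := fun y => sinhcSqrt (S * y) ^ (-(1 / 2) : ℝ)) ξ (Real.exp_ne_zero ξ)
    (Real.rpow_pos_of_pos hξ _).ne' Real.differentiableAt_exp (hd.rpow_const (.inl hξ.ne')),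
    Real.logDeriv_exp, logDeriv_fun_rpow_const hd hξ, logDeriv_comp_const_mul, Pi.one_apply]
  ring

theorem deriv_logDeriv_amplitudeMGF_zero (S : ℝ) :
    deriv (logDeriv (amplitudeMGF S)) 0 = -(S ^ 2 / 2) * deriv (logDeriv sinhcSqrt) 0 := by
  have hpos : ∀ᶠ ξ in 𝓝 0, 0 < sinhcSqrt (S * ξ) :=
    continuousAt_const.eventually_lt
      (differentiable_sinhcSqrt.continuous.comp (continuous_const_mul S)).continuousAt
      (by simp [sinhcSqrt_zero])
  have heq : logDeriv (amplitudeMGF S) =ᶠ[𝓝 0]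
      fun ξ => 1 - S / 2 * logDeriv sinhcSqrt (S * ξ) :=
    hpos.mono fun ξ hξ => logDeriv_amplitudeMGF S hξ
  rw [heq.deriv_eq, deriv_const_sub, deriv_const_mul_field, deriv_comp_mul_left, mul_zero,
    smul_eq_mul]
  ring

theorem amplitude_mgf_derivatives_general (S : ℝ) :
    deriv (amplitudeMGF S) 0 = 1 - S / 12 ∧
    deriv (deriv (amplitudeMGF S)) 0 - (deriv (amplitudeMGF S) 0) ^ 2 = S ^ 2 / 180 := by
  have hM' : deriv (amplitudeMGF S) 0 = logDeriv (amplitudeMGF S) 0 := by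
    rw [logDeriv_apply, amplitudeMGF_zero, div_one]
  have hsinhc : deriv (logDeriv sinhcSqrt) 0 = 1 / 60 - (1 / 6) ^ 2 := by
    rw [← deriv_deriv_sub_sq_eq_deriv_logDeriv contDiff_sinhcSqrt.contDiffAt sinhcSqrt_zero,
      deriv_deriv_sinhcSqrt_zero, deriv_sinhcSqrt_zero]
  constructor
  · rw [hM', logDeriv_amplitudeMGF S (by simp [sinhcSqrt_zero]), mul_zero, logDeriv_apply,
      sinhcSqrt_zero, deriv_sinhcSqrt_zero]
    ring
  · rw [deriv_deriv_sub_sq_eq_deriv_logDeriv (contDiffAt_amplitudeMGF_zero S)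
      (amplitudeMGF_zero S), deriv_logDeriv_amplitudeMGF_zero, hsinhc]
    ring

theorem amplitude_mgf_derivatives (S : ℝ) (hS : 0 < S) :
    deriv (amplitudeMGF S) 0 = 1 - S / 12 ∧
    deriv (deriv (amplitudeMGF S)) 0 - (deriv (amplitudeMGF S) 0) ^ 2 = S ^ 2 / 180 :=
  amplitude_mgf_derivatives_general S
end
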